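/- Under the stated block-operator hypotheses, if sup spec(A0) < inf spec(A1), then the open interval (sup spec(A0), inf spec(A1)) is contained in the resolvent set of B; that is, no μ with sup spec(A0) < μ < inf spec(A1) belongs to the spectrum of the block operator B. -/

import Mathlib

open ContinuousLinearMap

/-- The self-adjoint block operator `B (x, y) = (A0 x + V y, V* x + A1 y)` on the
Hilbert direct sum `H = H0 ⊕ H1` (modelled as `WithLp 2 (H0 × H1)`). -/
noncomputable def blockOperator {H0 H1 : Type*}
    [NormedAddCommGroup H0] [InnerProductSpace ℂ H0] [CompleteSpace H0]
    [NormedAddCommGroup H1] [InnerProductSpace ℂ H1] [CompleteSpace H1]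
    (A0 : H0 →L[ℂ] H0) (A1 : H1 →L[ℂ] H1) (V : H1 →L[ℂ] H0) :
    WithLp 2 (H0 × H1) →L[ℂ] WithLp 2 (H0 × H1) :=
  (WithLp.prodContinuousLinearEquiv 2 ℂ H0 H1).symm.toContinuousLinearMap ∘L
    ((A0 ∘L ContinuousLinearMap.fst ℂ H0 H1 + V ∘L ContinuousLinearMap.snd ℂ H0 H1).prod
      ((ContinuousLinearMap.adjoint V) ∘L ContinuousLinearMap.fst ℂ H0 H1
        + A1 ∘L ContinuousLinearMap.snd ℂ H0 H1)) ∘L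
    (WithLp.prodContinuousLinearEquiv 2 ℂ H0 H1).toContinuousLinearMap

local notation "⟪" x ", " y "⟫" => @inner ℂ _ _ x y

lemma quad_form_le {H : Type*} [NormedAddCommGroup H] [InnerProductSpace ℂ H] [CompleteSpace H]
    (A : H →L[ℂ] H) (hA : IsSelfAdjoint A) (a : ℝ)
    (h : ∀ z ∈ spectrum ℂ A, z.re ≤ a) (x : H) :
    (⟪A x, x⟫).re ≤ a * ‖x‖ ^ 2 := by
  set M : H →L[ℂ] H := algebraMap ℂ (H →L[ℂ] H) (a : ℂ) - A with hM
  have hMsa : IsSelfAdjoint M := by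
    refine IsSelfAdjoint.sub ?_ hA
    exact IsSelfAdjoint.algebraMap _ (by simp [isSelfAdjoint_iff, Complex.star_def, Complex.conj_ofReal])
  have hMnonneg : (0 : H →L[ℂ] H) ≤ M := by
    rw [StarOrderedRing.nonneg_iff_spectrum_nonneg (R := ℝ) M hMsa]
    intro t ht
    have htC : (t : ℂ) ∈ spectrum ℂ M := by
      rw [← spectrum.algebraMap_mem_iff ℂ] at ht
      exact ht
    rw [hM, ← spectrum.singleton_sub_eq] at htC
    obtain ⟨r, hr, z, hz, hrz⟩ := htC
    simp only [Set.mem_singleton_iff] at hr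
    subst hr
    have h1 := h z hz
    have h2 : (t : ℝ) = a - z.re := by
      have := congrArg Complex.re hrz
      simpa using this.symm
    linarith
  have hpos : M.IsPositive := (ContinuousLinearMap.nonneg_iff_isPositive M).mp hMnonneg
  have hnn := hpos.inner_nonneg_left x
  replace hnn := (Complex.nonneg_iff.mp hnn).1
  have h3 : ⟪M x, x⟫ = ((a * ‖x‖ ^ 2 : ℝ) : ℂ) - ⟪A x, x⟫ := by
    rw [hM]
    simp only [sub_apply, inner_sub_left, Algebra.algebraMap_eq_smul_one, smul_apply, ContinuousLinearMap.one_apply]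
    rw [inner_smul_left, inner_self_eq_norm_sq_to_K (𝕜 := ℂ)]
    push_cast
    simp [Complex.conj_ofReal]
  rw [h3] at hnn
  simp only [Complex.sub_re, Complex.ofReal_re] at hnn
  linarith

lemma quad_form_ge {H : Type*} [NormedAddCommGroup H] [InnerProductSpace ℂ H] [CompleteSpace H]
    (A : H →L[ℂ] H) (hA : IsSelfAdjoint A) (b : ℝ)
    (h : ∀ z ∈ spectrum ℂ A, b ≤ z.re) (x : H) :
    b * ‖x‖ ^ 2 ≤ (⟪A x, x⟫).re := by
  have hneg := quad_form_le (-A) hA.neg (-b) (fun z hz => by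
    rw [← spectrum.neg_eq, Set.mem_neg] at hz
    have := h (-z) hz
    simp only [Complex.neg_re] at this ⊢
    linarith) x
  simp only [neg_apply, inner_neg_left, Complex.neg_re, neg_mul] at hneg
  linarith

/-- The block operator's first component. -/
lemma blockOperator_fst {H0 H1 : Type*}
    [NormedAddCommGroup H0] [InnerProductSpace ℂ H0] [CompleteSpace H0]
    [NormedAddCommGroup H1] [InnerProductSpace ℂ H1] [CompleteSpace H1]
    (A0 : H0 →L[ℂ] H0) (A1 : H1 →L[ℂ] H1) (V : H1 →L[ℂ] H0) (w : WithLp 2 (H0 × H1)) :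
    (blockOperator A0 A1 V w).fst = A0 w.fst + V w.snd := by
  simp [blockOperator]

lemma blockOperator_snd {H0 H1 : Type*}
    [NormedAddCommGroup H0] [InnerProductSpace ℂ H0] [CompleteSpace H0]
    [NormedAddCommGroup H1] [InnerProductSpace ℂ H1] [CompleteSpace H1]
    (A0 : H0 →L[ℂ] H0) (A1 : H1 →L[ℂ] H1) (V : H1 →L[ℂ] H0) (w : WithLp 2 (H0 × H1)) :
    (blockOperator A0 A1 V w).snd = (ContinuousLinearMap.adjoint V) w.fst + A1 w.snd := by
  simp [blockOperator]

set_option maxHeartbeats 1000000 in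
/-- **The spectral gap of the diagonal part stays open** (Remark 2.8): if
`sup spec(A0) < inf spec(A1)`, then the open interval between them lies in the
resolvent set of the block operator `B`. -/
theorem interval_subset_resolvent_of_spectral_gap
    {H0 H1 : Type*}
    [NormedAddCommGroup H0] [InnerProductSpace ℂ H0] [CompleteSpace H0]
    [NormedAddCommGroup H1] [InnerProductSpace ℂ H1] [CompleteSpace H1]
    [TopologicalSpace.SeparableSpace H0] [TopologicalSpace.SeparableSpace H1]
    (A0 : H0 →L[ℂ] H0) (A1 : H1 →L[ℂ] H1) (V : H1 →L[ℂ] H0)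
    (hA0 : IsSelfAdjoint A0) (hA1 : IsSelfAdjoint A1)
    (a b : ℝ) (hab : a < b)
    (hspec0 : ∀ z ∈ spectrum ℂ A0, z.re ≤ a)
    (hspec1 : ∀ z ∈ spectrum ℂ A1, b ≤ z.re) :
    ∀ μ : ℝ, a < μ → μ < b → (μ : ℂ) ∉ spectrum ℂ (blockOperator A0 A1 V) := by
  intro μ hμa hμb
  rw [spectrum.notMem_iff, ContinuousLinearMap.isUnit_iff_bijective]
  set B := blockOperator A0 A1 V with hB
  set T : WithLp 2 (H0 × H1) →L[ℂ] WithLp 2 (H0 × H1) :=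
    algebraMap ℂ _ (μ : ℂ) - B with hT
  set c : ℝ := min (μ - a) (b - μ) with hc
  have hcpos : 0 < c := lt_min (by linarith) (by linarith)
  have hTfst : ∀ w : WithLp 2 (H0 × H1),
      (T w).fst = (μ : ℂ) • w.fst - (A0 w.fst + V w.snd) := by
    intro w
    rw [hT]
    simp only [sub_apply, Algebra.algebraMap_eq_smul_one, smul_apply, ContinuousLinearMap.one_apply,
      WithLp.sub_fst, WithLp.smul_fst, hB, blockOperator_fst]
  have hTsnd : ∀ w : WithLp 2 (H0 × H1),
      (T w).snd = (μ : ℂ) • w.snd - ((ContinuousLinearMap.adjoint V) w.fst + A1 w.snd) := by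
    intro w
    rw [hT]
    simp only [sub_apply, Algebra.algebraMap_eq_smul_one, smul_apply, ContinuousLinearMap.one_apply,
      WithLp.sub_snd, WithLp.smul_snd, hB, blockOperator_snd]
  -- the key lower bound
  have key : ∀ w : WithLp 2 (H0 × H1), c * ‖w‖ ≤ ‖T w‖ := by
    intro w
    set x := w.fst with hx
    set y := w.snd with hy
    set u : WithLp 2 (H0 × H1) := (WithLp.equiv 2 (H0 × H1)).symm (x, -y) with hu
    have hufst : u.fst = x := rfl
    have husnd : u.snd = -y := rfl
    have hnormu : ‖u‖ = ‖w‖ := by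
      have h1 : ‖u‖ ^ 2 = ‖w‖ ^ 2 := by
        rw [WithLp.prod_norm_sq_eq_of_L2, WithLp.prod_norm_sq_eq_of_L2, hufst, husnd,
          norm_neg, hx, hy]
      rw [← Real.sqrt_sq (norm_nonneg u), ← Real.sqrt_sq (norm_nonneg w), h1]
    have hadj : (⟪(ContinuousLinearMap.adjoint V) x, y⟫).re = (⟪V y, x⟫).re := by
      rw [ContinuousLinearMap.adjoint_inner_left]
      exact inner_re_symm (𝕜 := ℂ) x (V y)
    have hxx : (⟪x, x⟫).re = ‖x‖ ^ 2 := by simpa using inner_self_eq_norm_sq (𝕜 := ℂ) x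
    have hyy : (⟪y, y⟫).re = ‖y‖ ^ 2 := by simpa using inner_self_eq_norm_sq (𝕜 := ℂ) y
    have hxim : (⟪x, x⟫).im = 0 := inner_self_im (𝕜 := ℂ) x
    have hyim : (⟪y, y⟫).im = 0 := inner_self_im (𝕜 := ℂ) y
    have hinner : (⟪T w, u⟫).re =
        (μ * ‖x‖ ^ 2 - (⟪A0 x, x⟫).re) + ((⟪A1 y, y⟫).re - μ * ‖y‖ ^ 2) := by
      rw [WithLp.prod_inner_apply, WithLp.ofLp_fst, WithLp.ofLp_fst, WithLp.ofLp_snd, WithLp.ofLp_snd, hTfst w, hTsnd w, hufst, husnd]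
      simp only [inner_sub_left, inner_add_left, inner_smul_left, inner_neg_right,
        Complex.conj_ofReal, ← hx, ← hy]
      simp only [Complex.add_re, Complex.sub_re, Complex.neg_re, Complex.mul_re,
        Complex.ofReal_re, Complex.ofReal_im, hxx, hyy, hxim, hyim]
      rw [show ((⟪(ContinuousLinearMap.adjoint V) x, y⟫).re : ℝ) = (⟪V y, x⟫).re from hadj]
      ring
    have hbound0 := quad_form_le A0 hA0 a hspec0 x
    have hbound1 := quad_form_ge A1 hA1 b hspec1 y
    have hlow : c * ‖w‖ ^ 2 ≤ (⟪T w, u⟫).re := by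
      rw [hinner, WithLp.prod_norm_sq_eq_of_L2, ← hx, ← hy]
      have h1 : c ≤ μ - a := min_le_left _ _
      have h2 : c ≤ b - μ := min_le_right _ _
      nlinarith [sq_nonneg ‖x‖, sq_nonneg ‖y‖]
    have hcs : (⟪T w, u⟫).re ≤ ‖T w‖ * ‖w‖ := by
      calc (⟪T w, u⟫).re ≤ ‖⟪T w, u⟫‖ := by
            exact Complex.re_le_norm _
        _ ≤ ‖T w‖ * ‖u‖ := norm_inner_le_norm _ _
        _ = ‖T w‖ * ‖w‖ := by rw [hnormu]
    rcases eq_or_ne w 0 with rfl | hw0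
    · simp
    · have hwpos : 0 < ‖w‖ := norm_pos_iff.mpr hw0
      have : c * ‖w‖ * ‖w‖ ≤ ‖T w‖ * ‖w‖ := by nlinarith
      exact le_of_mul_le_mul_right this hwpos
  have hinj : Function.Injective T := by
    intro v w hvw
    have h0 : T (v - w) = 0 := by rw [map_sub, hvw, sub_self]
    have := key (v - w)
    rw [h0, norm_zero] at this
    have : ‖v - w‖ ≤ 0 := by nlinarith [norm_nonneg (v - w)]
    rwa [← sub_eq_zero, ← norm_le_zero_iff]
  -- symmetry of T
  have hsymm : ∀ v w : WithLp 2 (H0 × H1), ⟪T v, w⟫ = ⟪v, T w⟫ := by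
    intro v w
    rw [WithLp.prod_inner_apply, WithLp.prod_inner_apply, WithLp.ofLp_fst, WithLp.ofLp_fst, WithLp.ofLp_snd, WithLp.ofLp_snd, WithLp.ofLp_fst, WithLp.ofLp_fst, WithLp.ofLp_snd, WithLp.ofLp_snd, hTfst, hTsnd, hTfst, hTsnd]
    have hs0 := (ContinuousLinearMap.isSelfAdjoint_iff_isSymmetric.mp hA0) v.fst w.fst
    have hs1 := (ContinuousLinearMap.isSelfAdjoint_iff_isSymmetric.mp hA1) v.snd w.snd
    simp only [ContinuousLinearMap.coe_coe] at hs0 hs1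
    have hV1 : ⟪V v.snd, w.fst⟫ = ⟪v.snd, (ContinuousLinearMap.adjoint V) w.fst⟫ := by
      rw [ContinuousLinearMap.adjoint_inner_right]
    have hV2 : ⟪(ContinuousLinearMap.adjoint V) v.fst, w.snd⟫ = ⟪v.fst, V w.snd⟫ := by
      rw [ContinuousLinearMap.adjoint_inner_left]
    simp only [inner_sub_left, inner_sub_right, inner_add_left, inner_add_right,
      inner_smul_left, inner_smul_right, Complex.conj_ofReal, hs0, hs1, hV1, hV2]
    ring
  refine ⟨hinj, ?_⟩
  -- surjectivity
  have hanti : AntilipschitzWith (⟨c⁻¹, by positivity⟩ : NNReal) T := by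
    apply AddMonoidHomClass.antilipschitz_of_bound
    intro w
    have := key w
    have hle : ‖w‖ ≤ c⁻¹ * ‖T w‖ := by
      rw [← mul_le_mul_iff_right₀ hcpos]
      calc c * ‖w‖ ≤ ‖T w‖ := key w
        _ = c * (c⁻¹ * ‖T w‖) := by field_simp
    exact hle
  have hclosedrange : IsClosed (Set.range T) :=
    hanti.isClosed_range T.uniformContinuous
  set K : Submodule ℂ (WithLp 2 (H0 × H1)) := LinearMap.range (T : WithLp 2 (H0 × H1) →ₗ[ℂ] WithLp 2 (H0 × H1)) with hK
  have hKclosed : IsClosed (K : Set (WithLp 2 (H0 × H1))) := by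
    rw [hK, LinearMap.coe_range]
    exact hclosedrange
  haveI : CompleteSpace K := hKclosed.completeSpace_coe
  have horth : Kᗮ = ⊥ := by
    rw [Submodule.eq_bot_iff]
    intro w hw
    have hTw : T w = 0 := by
      have h1 : ∀ v, ⟪T v, w⟫ = 0 := fun v => hw (T v) ⟨v, rfl⟩
      have h2 : ⟪T w, T w⟫ = 0 := by rw [← hsymm (T w) w]; exact h1 (T w)
      exact inner_self_eq_zero.mp h2
    have := key w
    rw [hTw, norm_zero] at this
    have : ‖w‖ ≤ 0 := by nlinarith [norm_nonneg w]
    rwa [← norm_le_zero_iff]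
  have hKtop : K = ⊤ := Submodule.orthogonal_eq_bot_iff.mp horth
  exact LinearMap.range_eq_top.mp hKtop
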